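/- arXiv:2306.02969 — 4 statements merged into one kernel-verified Lean document; each statement's English description precedes it below -/
import Mathlib

section
/- For every delta in (0,1) there exist alpha_0 > 0, Delta_0 > 0 and C > 0 such that for all alpha in [0, alpha_0), Delta in [0, Delta_0) and R in [delta, 1/delta], the inequality ((R+Delta)^2 - R^2 sin^2 alpha)^{3/2} - R^3 cos^3 alpha <= (R+Delta)^3 - R^3 - (R^2/4) Delta alpha^2 + C Delta alpha^4 holds. -/
set_option maxHeartbeats 1000000


/-- Taylor-type comparison (Lemma 2.6): for every `δ ∈ (0,1)` there are `α₀, Δ₀, C > 0` such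
that for all `α ∈ [0,α₀)`, `Δ ∈ [0,Δ₀)` and `R ∈ [δ, 1/δ]`,
`((R+Δ)² - R² sin²α)^{3/2} - R³ cos³α ≤ (R+Δ)³ - R³ - (R²/4) Δ α² + C Δ α⁴`. -/
theorem stmt0 (δ : ℝ) (hδ0 : 0 < δ) (hδ1 : δ < 1) :
    ∃ α₀ Δ₀ C : ℝ, 0 < α₀ ∧ 0 < Δ₀ ∧ 0 < C ∧
      ∀ α Δ R : ℝ, 0 ≤ α → α < α₀ → 0 ≤ Δ → Δ < Δ₀ → δ ≤ R → R ≤ 1/δ →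
        ((R + Δ)^2 - R^2 * Real.sin α ^ 2) ^ ((3:ℝ)/2) - R^3 * Real.cos α ^ 3
          ≤ (R + Δ)^3 - R^3 - R^2/4 * Δ * α^2 + C * Δ * α^4 := by
  refine ⟨2/5, δ/10, 1/δ^2, by norm_num, by positivity, by positivity, ?_⟩
  intro α Δ R hα0 hα1 hΔ0 hΔ1 hR1 hR2
  have hR0 : 0 < R := lt_of_lt_of_le hδ0 hR1
  have hΔR : Δ ≤ R/10 := by linarith
  have hα2 : α^2 ≤ 4/25 := by
    have h1 : α*α ≤ (2/5)*(2/5) := mul_le_mul hα1.le hα1.le hα0 (by norm_num)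
    linarith [h1]
  have hα4' : α^2*α^2 ≤ α^2*(4/25) := mul_le_mul_of_nonneg_left hα2 (sq_nonneg α)
  have hα4 : α^4 ≤ 16/625 := by linarith [hα4', hα2]
  have hαabs : |α| ≤ 1 := by rw [abs_of_nonneg hα0]; linarith
  have hcb := Real.cos_bound hαabs
  rw [abs_of_nonneg hα0] at hcb
  have hcb' := abs_le.1 hcb
  set c := Real.cos α with hc
  have hc09 : (9:ℝ)/10 ≤ c := by linarith [hcb'.1]
  have hc1 : c ≤ 1 := Real.cos_le_one α
  have hcu : c ≤ 1 - α^2/2 + 5/96 * α^4 := by linarith [hcb'.2]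
  have hsin : Real.sin α ^ 2 = 1 - c^2 := by
    have := Real.sin_sq_add_cos_sq α; linarith
  set X := (R + Δ)^2 - R^2 * Real.sin α ^ 2 with hX
  set B := R * c with hB
  set D := 2*R*Δ + Δ^2 with hD
  have hXval : X = B^2 + D := by rw [hX, hsin, hB, hD]; ring
  have hc0 : (0:ℝ) < c := by linarith
  have hB0 : 0 < B := by rw [hB]; exact mul_pos hR0 hc0
  have hBR : B ≤ R := by
    have := mul_le_mul_of_nonneg_left hc1 hR0.le
    rw [hB]; linarith [this]
  have hB09 : 9/10 * R ≤ B := by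
    have := mul_le_mul_of_nonneg_left hc09 hR0.le
    rw [hB]; linarith [this]
  have hD0 : 0 ≤ D := by
    have := mul_nonneg hR0.le hΔ0
    rw [hD]; linarith [sq_nonneg Δ]
  have hX0 : 0 ≤ X := by rw [hXval]; linarith [sq_nonneg B]
  set w := Real.sqrt X with hw
  have hw2 : w^2 = X := Real.sq_sqrt hX0
  have hw0 : 0 ≤ w := Real.sqrt_nonneg X
  have hrpow : X ^ ((3:ℝ)/2) = w^3 := by
    rw [hw, Real.sqrt_eq_rpow, ← Real.rpow_natCast (X ^ ((1:ℝ)/2)) 3,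
        ← Real.rpow_mul hX0]
    norm_num
  rw [hrpow]
  have hwge : B ≤ w := by
    have h1 : Real.sqrt (B^2) ≤ w := Real.sqrt_le_sqrt (by rw [hXval]; linarith)
    rwa [Real.sqrt_sq hB0.le] at h1
  have hwle : w ≤ R + Δ := by
    have h1 : w ≤ Real.sqrt ((R+Δ)^2) :=
      Real.sqrt_le_sqrt
        (by rw [hX]; linarith [mul_nonneg (sq_nonneg R) (sq_nonneg (Real.sin α))])
    rwa [Real.sqrt_sq (by linarith)] at h1
  have hw11 : w ≤ 11/10 * R := by linarith
  -- Step A key polynomial inequality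
  have hT1 : 0 ≤ (R + Δ - w) * (w*(R+Δ) + R*(w + R + Δ)) := by
    apply mul_nonneg (by linarith)
    have := mul_nonneg hw0 (by linarith : (0:ℝ) ≤ R + Δ)
    have := mul_nonneg hR0.le (by linarith : (0:ℝ) ≤ w + R + Δ)
    linarith
  have hT2 : 0 ≤ (R - B) * (4*(w*R + w*B + R*B) - (w + B) * (w + R)) := by
    apply mul_nonneg (by linarith)
    have f1 := mul_nonneg hw0 (by linarith : (0:ℝ) ≤ 11/10*R - w)
    have f2 := mul_nonneg hw0 hR0.le
    have f3 := mul_nonneg hw0 hB0.le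
    have f4 := mul_nonneg hR0.le hB0.le
    linarith [f1, f2, f3, f4]
  have hwR : (0:ℝ) < w + R := by linarith
  have hK : 0 ≤ ((R+Δ)^2 + (R+Δ)*R + R^2) * (w + B) - (w^2 + w*B + B^2) * (2*R + Δ)
      - (R - B) * ((w + B) * (2*R + Δ)) / 4 := by
    have hKid : ((R+Δ)^2 + (R+Δ)*R + R^2) * (w + B) - (w^2 + w*B + B^2) * (2*R + Δ)
        - (R - B) * ((w + B) * (2*R + Δ)) / 4
        = (4*(w+B)*((R + Δ - w) * (w*(R+Δ) + R*(w + R + Δ)))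
           + (2*R+Δ)*((R - B) * (4*(w*R + w*B + R*B) - (w + B) * (w + R))))
          / (4*(w+R)) := by
      rw [eq_div_iff (by positivity : (4:ℝ)*(w+R) ≠ 0)]
      ring
    rw [hKid]
    apply div_nonneg _ (by linarith)
    have h1 : 0 ≤ 4*(w+B)*((R + Δ - w) * (w*(R+Δ) + R*(w + R + Δ))) :=
      mul_nonneg (by linarith) hT1
    have h2 : 0 ≤ (2*R+Δ)*((R - B) * (4*(w*R + w*B + R*B) - (w + B) * (w + R))) :=
      mul_nonneg (by linarith) hT2
    linarith
  have hs : (0:ℝ) < (w + B) * (2*R + Δ) := mul_pos (by linarith) (by linarith)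
  have stepA : w^3 - B^3 ≤ (R+Δ)^3 - R^3 - D/4*(R - B) := by
    rw [← mul_le_mul_iff_of_pos_right hs]
    have e1 : (w^3 - B^3) * ((w+B)*(2*R+Δ)) = D * ((w^2 + w*B + B^2) * (2*R+Δ)) := by
      linear_combination (2*R+Δ) * (w^2 + w*B + B^2) * hw2 + (2*R+Δ) * (w^2 + w*B + B^2) * hXval
    have e2 : ((R+Δ)^3 - R^3 - D/4*(R-B)) * ((w+B)*(2*R+Δ))
        = D * (((R+Δ)^2 + (R+Δ)*R + R^2) * (w + B) - (R - B) * ((w+B)*(2*R+Δ)) / 4) := by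
      rw [hD]; ring
    rw [e1, e2]
    apply mul_le_mul_of_nonneg_left _ hD0
    linarith
  -- Step B
  have ht0 : 0 ≤ α^2/2 - 5/96 * α^4 := by linarith [hα4', sq_nonneg α]
  have hRB : R * (α^2/2 - 5/96 * α^4) ≤ R - B := by
    have h1 : α^2/2 - 5/96 * α^4 ≤ 1 - c := by linarith
    have h2 := mul_le_mul_of_nonneg_left h1 hR0.le
    rw [hB]; linarith [h2]
  have hRB0 : 0 ≤ R - B := le_trans (mul_nonneg hR0.le ht0) hRB
  have hD2 : 2*R*Δ ≤ D := by rw [hD]; linarith [sq_nonneg Δ]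
  have hC : R^2 ≤ 1/δ^2 := by
    have key : R*R ≤ (1/δ)*(1/δ) := mul_le_mul hR2 hR2 hR0.le (by positivity)
    calc R^2 = R*R := sq R
    _ ≤ (1/δ)*(1/δ) := key
    _ = 1/δ^2 := by ring
  have h1 : (2*R*Δ)*(R * (α^2/2 - 5/96 * α^4)) ≤ D*(R - B) :=
    mul_le_mul hD2 hRB (mul_nonneg hR0.le ht0) hD0
  have h2 : R^2*(Δ*α^4) ≤ (1/δ^2)*(Δ*α^4) :=
    mul_le_mul_of_nonneg_right hC (by positivity)
  have h3 : 0 ≤ R^2*(Δ*α^4) := by positivity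
  have stepB : R^2/4 * Δ * α^2 - 1/δ^2 * Δ * α^4 ≤ D/4*(R - B) := by linarith [h1, h2, h3]
  have hfin : w^3 - R^3 * c^3 = w^3 - B^3 := by rw [hB]; ring
  rw [hfin]
  linarith [stepA, stepB]
end

section
/- Let v and v' be unit vectors in R^3 forming an angle beta in [0, pi/2]. Then for every x in R^3, the maximum of q . x over unit vectors q orthogonal to v' is at most the maximum of (q . x) + sqrt(2) * beta * |x| over unit vectors q orthogonal to v. -/
open InnerProductGeometry Module

local notation "E3" => EuclideanSpace ℝ (Fin 3)

lemma exists_unit_orth (v : E3) : ∃ q : E3, ‖q‖ = 1 ∧ (inner ℝ q v : ℝ) = 0 := by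
  by_cases hv0 : v = 0
  · exact ⟨EuclideanSpace.single 0 1, by simp, by simp [hv0]⟩
  · have hK : finrank ℝ (ℝ ∙ v) + finrank ℝ ((ℝ ∙ v)ᗮ) = 3 := by
      rw [Submodule.finrank_add_finrank_orthogonal]
      simp [finrank_euclideanSpace_fin]
    have h1 : finrank ℝ (ℝ ∙ v) = 1 := finrank_span_singleton hv0
    have hbot : ((ℝ ∙ v)ᗮ : Submodule ℝ E3) ≠ ⊥ := by
      intro h
      rw [h] at hK
      simp [h1, finrank_bot] at hK
    obtain ⟨w, hwK, hw0⟩ := Submodule.exists_mem_ne_zero_of_ne_bot hbot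
    refine ⟨‖w‖⁻¹ • w, norm_smul_inv_norm hw0, ?_⟩
    have hvw : (inner ℝ v w : ℝ) = 0 :=
      (Submodule.mem_orthogonal _ _).1 hwK v (Submodule.mem_span_singleton_self v)
    rw [real_inner_smul_left, real_inner_comm, hvw, mul_zero]

lemma key (v v' q : E3) (hv : ‖v‖ = 1) (hv' : ‖v'‖ = 1) (hq : ‖q‖ = 1)
    (hqv' : (inner ℝ q v' : ℝ) = 0) {β : ℝ} (hβ : β = angle v v') :
    ∃ q' : E3, ‖q'‖ = 1 ∧ (inner ℝ q' v : ℝ) = 0 ∧ ‖q - q'‖ ≤ Real.sqrt 2 * β := by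
  have hβ0 : 0 ≤ β := hβ ▸ angle_nonneg v v'
  have hcos : (inner ℝ v v' : ℝ) = Real.cos β := by
    rw [hβ, ← cos_angle_mul_norm_mul_norm, hv, hv']; ring
  set c : ℝ := inner ℝ q v with hc
  have hc2 : c ^ 2 ≤ β ^ 2 := by
    have h1 : c = (inner ℝ q (v - v') : ℝ) := by rw [inner_sub_right, hqv', sub_zero]
    have h2 : |c| ≤ ‖v - v'‖ := by
      rw [h1]
      calc |(inner ℝ q (v - v') : ℝ)| ≤ ‖q‖ * ‖v - v'‖ := abs_real_inner_le_norm _ _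
        _ = ‖v - v'‖ := by rw [hq, one_mul]
    have h3 : ‖v - v'‖ ^ 2 = 2 - 2 * Real.cos β := by
      rw [norm_sub_sq_real, hv, hv', hcos]; ring
    have h4 : 1 - β ^ 2 / 2 ≤ Real.cos β := Real.one_sub_sq_div_two_le_cos
    nlinarith [sq_abs c, abs_nonneg c, norm_nonneg (v - v')]
  have hqq : (inner ℝ q q : ℝ) = 1 := by
    rw [real_inner_self_eq_norm_sq, hq]; norm_num
  by_cases hw0 : q - c • v = 0
  · have hqcv : q = c • v := by rwa [sub_eq_zero] at hw0
    have hc1 : c ^ 2 = 1 := by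
      have : (inner ℝ q q : ℝ) = c ^ 2 := by
        nth_rewrite 1 [hqcv]
        rw [real_inner_smul_left, hc, real_inner_comm]
        ring
      linarith [hqq, this.symm.trans hqq]
    have hcne : c ≠ 0 := by intro h; rw [h] at hc1; norm_num at hc1
    have hvv' : (inner ℝ v v' : ℝ) = 0 := by
      have : (inner ℝ q v' : ℝ) = c * (inner ℝ v v' : ℝ) := by
        nth_rewrite 1 [hqcv]; rw [real_inner_smul_left]
      rw [hqv'] at this
      exact (mul_eq_zero.1 this.symm).resolve_left hcne
    have hcosz : Real.cos β = 0 := by rw [← hcos, hvv']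
    have hβ1 : 1 ≤ β := by
      by_contra h
      push_neg at h
      have : 0 < Real.cos β := by
        apply Real.cos_pos_of_mem_Ioo
        constructor
        · linarith [Real.pi_gt_three]
        · linarith [Real.pi_gt_three]
      linarith
    refine ⟨v', hv', by rw [real_inner_comm]; exact hvv', ?_⟩
    have hnorm2 : ‖q - v'‖ ^ 2 = 2 := by
      rw [norm_sub_sq_real, hq, hv', hqv']; ring
    have : ‖q - v'‖ = Real.sqrt 2 := by
      rw [← hnorm2, Real.sqrt_sq (norm_nonneg _)]
    rw [this]
    exact le_mul_of_one_le_right (Real.sqrt_nonneg 2) hβ1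
  · set w : E3 := q - c • v with hwdef
    set s : ℝ := ‖w‖ with hs
    have hs0 : 0 < s := norm_pos_iff.2 hw0
    have hwv : (inner ℝ w v : ℝ) = 0 := by
      rw [hwdef, inner_sub_left, real_inner_smul_left, real_inner_self_eq_norm_sq, hv, ← hc]
      ring
    have hqw : (inner ℝ q w : ℝ) = 1 - c ^ 2 := by
      rw [hwdef, inner_sub_right, real_inner_smul_right, hqq, ← hc]; ring
    have hw2 : s ^ 2 = 1 - c ^ 2 := by
      rw [hs, ← real_inner_self_eq_norm_sq, hwdef]
      rw [inner_sub_left, real_inner_smul_left, inner_sub_right, inner_sub_right,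
        real_inner_smul_right, real_inner_smul_right, hqq, real_inner_self_eq_norm_sq, hv,
        real_inner_comm v q]
      have hc' : c = (inner ℝ v q : ℝ) := hc.trans (real_inner_comm v q)
      linear_combination (2 * c) * hc'
    refine ⟨s⁻¹ • w, norm_smul_inv_norm hw0, ?_, ?_⟩
    · rw [real_inner_smul_left, hwv, mul_zero]
    · have hnq' : ‖s⁻¹ • w‖ = 1 := norm_smul_inv_norm hw0
      have hsle : s ≤ 1 := by nlinarith [sq_nonneg c]
      have hnorm2 : ‖q - s⁻¹ • w‖ ^ 2 = 2 - 2 * s := by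
        rw [norm_sub_sq_real, hq, hnq', real_inner_smul_right, hqw, ← hw2]
        field_simp
        ring
      have hb : ‖q - s⁻¹ • w‖ ^ 2 ≤ (Real.sqrt 2 * β) ^ 2 := by
        rw [hnorm2, mul_pow, Real.sq_sqrt (by norm_num : (0:ℝ) ≤ 2)]
        nlinarith
      calc ‖q - s⁻¹ • w‖ = Real.sqrt (‖q - s⁻¹ • w‖ ^ 2) := (Real.sqrt_sq (norm_nonneg _)).symm
        _ ≤ Real.sqrt ((Real.sqrt 2 * β) ^ 2) := Real.sqrt_le_sqrt hb
        _ = Real.sqrt 2 * β := Real.sqrt_sq (by positivity)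

/-- If unit vectors `v, v'` in `ℝ³` form an angle `β ∈ [0, π/2]`, then for every `x ∈ ℝ³`
the maximum of `⟪q, x⟫` over unit vectors `q ⟂ v'` is at most the maximum of
`⟪q, x⟫ + √2 β ‖x‖` over unit vectors `q ⟂ v`. -/
theorem stmt1 (v v' x : EuclideanSpace ℝ (Fin 3)) (hv : ‖v‖ = 1) (hv' : ‖v'‖ = 1)
    (β : ℝ) (hβ : β = InnerProductGeometry.angle v v') (hβ2 : β ≤ Real.pi / 2) :
    sSup {r : ℝ | ∃ q : EuclideanSpace ℝ (Fin 3),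
        ‖q‖ = 1 ∧ (inner ℝ q v' : ℝ) = 0 ∧ r = (inner ℝ q x : ℝ)}
      ≤ sSup {r : ℝ | ∃ q : EuclideanSpace ℝ (Fin 3),
          ‖q‖ = 1 ∧ (inner ℝ q v : ℝ) = 0 ∧ r = (inner ℝ q x : ℝ) + Real.sqrt 2 * β * ‖x‖} := by
  have hβ0 : 0 ≤ β := hβ ▸ angle_nonneg v v'
  set S := {r : ℝ | ∃ q : E3,
      ‖q‖ = 1 ∧ (inner ℝ q v : ℝ) = 0 ∧ r = (inner ℝ q x : ℝ) + Real.sqrt 2 * β * ‖x‖} with hS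
  have hbdd : BddAbove S := by
    refine ⟨‖x‖ + Real.sqrt 2 * β * ‖x‖, ?_⟩
    rintro r ⟨q, hq, -, rfl⟩
    have : (inner ℝ q x : ℝ) ≤ ‖x‖ := by
      calc (inner ℝ q x : ℝ) ≤ |(inner ℝ q x : ℝ)| := le_abs_self _
        _ ≤ ‖q‖ * ‖x‖ := abs_real_inner_le_norm _ _
        _ = ‖x‖ := by rw [hq, one_mul]
    linarith
  obtain ⟨q₀, hq₀, hq₀v⟩ := exists_unit_orth v
  have hmem1 : ((inner ℝ q₀ x : ℝ) + Real.sqrt 2 * β * ‖x‖) ∈ S := ⟨q₀, hq₀, hq₀v, rfl⟩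
  have hmem2 : ((inner ℝ (-q₀) x : ℝ) + Real.sqrt 2 * β * ‖x‖) ∈ S :=
    ⟨-q₀, by rw [norm_neg, hq₀], by rw [inner_neg_left, hq₀v, neg_zero], rfl⟩
  have hSnonneg : 0 ≤ sSup S := by
    rcases le_total 0 (inner ℝ q₀ x : ℝ) with h | h
    · refine le_trans ?_ (le_csSup hbdd hmem1)
      positivity
    · refine le_trans ?_ (le_csSup hbdd hmem2)
      rw [inner_neg_left]
      have : 0 ≤ Real.sqrt 2 * β * ‖x‖ := by positivity
      linarith
  apply Real.sSup_le _ hSnonneg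
  rintro r ⟨q, hq, hqv', rfl⟩
  obtain ⟨q', hq'1, hq'v, hq'near⟩ := key v v' q hv hv' hq hqv' hβ
  have hstep : (inner ℝ q x : ℝ) ≤ (inner ℝ q' x : ℝ) + Real.sqrt 2 * β * ‖x‖ := by
    have h1 : (inner ℝ q x : ℝ) - (inner ℝ q' x : ℝ) = (inner ℝ (q - q') x : ℝ) := by
      rw [inner_sub_left]
    have h2 : (inner ℝ (q - q') x : ℝ) ≤ ‖q - q'‖ * ‖x‖ := by
      calc (inner ℝ (q - q') x : ℝ) ≤ |(inner ℝ (q - q') x : ℝ)| := le_abs_self _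
        _ ≤ ‖q - q'‖ * ‖x‖ := abs_real_inner_le_norm _ _
    have h3 : ‖q - q'‖ * ‖x‖ ≤ Real.sqrt 2 * β * ‖x‖ :=
      mul_le_mul_of_nonneg_right hq'near (norm_nonneg x)
    linarith
  exact hstep.trans (le_csSup hbdd ⟨q', hq'1, hq'v, rfl⟩)
end

section
/- For all mu >= 0, y > 0 and s > 0, (1/y) * integral over m in (0,y) of integral over b in (-infinity, m) of exp(-mu*b - mu^2*s/2) * (2*(2m-b)/(s*sqrt(2*pi*s))) * exp(-(2m-b)^2/(2s)) db dm is at most 2*(1/sqrt(2*pi*s) + mu). -/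
open MeasureTheory Set Filter Real

/-- Integrability of a shifted Gaussian. -/
lemma gaussInt (s a : ℝ) (hs : 0 < s) :
    Integrable (fun x : ℝ => Real.exp (-(x - a)^2 / (2*s))) := by
  have h := (integrable_exp_neg_mul_sq (b := (2*s)⁻¹) (by positivity)).comp_sub_right a
  refine h.congr (Filter.Eventually.of_forall fun x => ?_)
  show Real.exp (-(2*s)⁻¹ * (x - a)^2) = _
  congr 1; ring

/-- Integrability of a linear times shifted Gaussian. -/
lemma linGaussInt (s a : ℝ) (hs : 0 < s) :
    Integrable (fun x : ℝ => (x - a) * Real.exp (-(x - a)^2 / (2*s))) := by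
  have h := (integrable_mul_exp_neg_mul_sq (b := (2*s)⁻¹) (by positivity)).comp_sub_right a
  refine h.congr (Filter.Eventually.of_forall fun x => ?_)
  show (x - a) * Real.exp (-(2*s)⁻¹ * (x - a)^2) = _
  congr 2; ring

/-- Value of the shifted Gaussian integral. -/
lemma gaussIntVal (s a : ℝ) (hs : 0 < s) :
    (∫ x : ℝ, Real.exp (-(x - a)^2 / (2*s))) = Real.sqrt (2 * Real.pi * s) := by
  have h1 : (∫ x : ℝ, Real.exp (-(x - a)^2 / (2*s)))
      = ∫ x : ℝ, Real.exp (-(2*s)⁻¹ * x^2) := by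
    rw [← integral_sub_right_eq_self (fun x : ℝ => Real.exp (-(2*s)⁻¹ * x^2)) a]
    congr 1; funext x; congr 1; ring
  rw [h1, integral_gaussian]
  congr 1
  field_simp

/-- FTC computation: the "derivative" part of the integral. -/
lemma ftcPart (s a m : ℝ) (hs : 0 < s) :
    (∫ x in Iic m, (-(x - a)/s) * Real.exp (-(x - a)^2 / (2*s)))
      = Real.exp (-(m - a)^2 / (2*s)) := by
  have hderiv : ∀ x ∈ Iic m, HasDerivAt (fun x : ℝ => Real.exp (-(x - a)^2 / (2*s)))
      ((-(x - a)/s) * Real.exp (-(x - a)^2 / (2*s))) x := by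
    intro x _
    have hu : HasDerivAt (fun x : ℝ => -(x - a)^2 / (2*s)) (-(x - a)/s) x := by
      have h := (((hasDerivAt_id x).sub_const a).pow 2).neg.div_const (2*s)
      refine h.congr_deriv ?_
      simp only [id, Nat.cast_ofNat, mul_one]
      field_simp
      ring
    simpa [mul_comm] using hu.exp
  have hint : IntegrableOn (fun x : ℝ => (-(x - a)/s) * Real.exp (-(x - a)^2 / (2*s))) (Iic m) := by
    have h := ((linGaussInt s a hs).const_mul (-s⁻¹)).integrableOn (s := Iic m)
    refine h.congr_fun (fun x _ => ?_) measurableSet_Iic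
    field_simp
  have htend : Tendsto (fun x : ℝ => Real.exp (-(x - a)^2 / (2*s))) atBot (nhds 0) := by
    apply Real.tendsto_exp_atBot.comp
    apply Tendsto.atBot_div_const (by positivity : (0:ℝ) < 2*s)
    apply tendsto_neg_atTop_atBot.comp
    have h1 : Tendsto (fun x : ℝ => x - a) atBot atBot := tendsto_atBot_add_const_right _ _ tendsto_id
    have h2 : Tendsto (fun x : ℝ => -(x - a)) atBot atTop := tendsto_neg_atBot_atTop.comp h1
    have := h2.atTop_mul_atTop₀ h2
    refine this.congr (fun x => ?_)
    ring
  have := integral_Iic_of_hasDerivAt_of_tendsto' hderiv hint htend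
  rw [this, sub_zero]

/-- Bound on the inner integral. -/
lemma innerBound (μ s m : ℝ) (hμ : 0 ≤ μ) (hs : 0 < s) (hm : 0 < m) :
    (∫ b in Iio m, Real.exp (-μ * b - μ^2 * s / 2) *
        (2 * (2*m - b) / (s * Real.sqrt (2 * Real.pi * s))) *
        Real.exp (-(2*m - b)^2 / (2*s)))
      ≤ 2 * (1 / Real.sqrt (2 * Real.pi * s) + μ) := by
  set c := Real.sqrt (2 * Real.pi * s) with hc
  have hcpos : 0 < c := Real.sqrt_pos.mpr (by positivity)
  set a : ℝ := 2*m - μ*s with ha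
  set F : ℝ → ℝ := fun b => Real.exp (-μ * b - μ^2 * s / 2) *
      (2 * (2*m - b) / (s * c)) * Real.exp (-(2*m - b)^2 / (2*s)) with hF
  set G : ℝ → ℝ := fun b => (2/c) * ((-(b - a)/s) * Real.exp (-(b - a)^2 / (2*s)))
      + (2*μ/c) * Real.exp (-(b - a)^2 / (2*s)) with hG
  have hGint : Integrable G := by
    apply Integrable.add
    · exact (((linGaussInt s a hs).const_mul (-s⁻¹)).const_mul (2/c)).congr
        (Filter.Eventually.of_forall (fun x => by field_simp))
    · exact (gaussInt s a hs).const_mul _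
  by_cases hFint : IntegrableOn F (Iio m)
  · have hFG : ∀ b ∈ Iio m, F b ≤ G b := by
      intro b hb
      have hKnn : 0 ≤ 2 * (2*m - b) / (s * c) := by
        have : (0:ℝ) < 2*m - b := by simp only [mem_Iio] at hb; linarith
        positivity
      have hGb : G b = (2 * (2*m - b) / (s * c)) * Real.exp (-(b - a)^2 / (2*s)) := by
        simp only [hG, ha]
        field_simp
        ring
      have hFb : F b = (2 * (2*m - b) / (s * c)) *
          Real.exp ((-μ * b - μ^2 * s / 2) + (-(2*m - b)^2 / (2*s))) := by
        rw [Real.exp_add]; simp only [hF]; ring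
      rw [hFb, hGb]
      apply mul_le_mul_of_nonneg_left _ hKnn
      apply Real.exp_le_exp.mpr
      have key : (-μ * b - μ^2 * s / 2) + (-(2*m - b)^2 / (2*s))
          = -(2*μ*m) + (-(b - a)^2 / (2*s)) := by
        simp only [ha]
        field_simp
        ring
      rw [key]
      have : 0 ≤ 2*μ*m := by positivity
      linarith
    calc (∫ b in Iio m, F b) ≤ ∫ b in Iio m, G b :=
          setIntegral_mono_on hFint hGint.integrableOn measurableSet_Iio hFG
      _ = ∫ b in Iic m, G b := (integral_Iic_eq_integral_Iio).symm
      _ = (2/c) * (∫ b in Iic m, (-(b - a)/s) * Real.exp (-(b - a)^2 / (2*s)))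
            + (2*μ/c) * ∫ b in Iic m, Real.exp (-(b - a)^2 / (2*s)) := by
          rw [integral_add, integral_const_mul, integral_const_mul]
          · exact ((((linGaussInt s a hs).const_mul (-s⁻¹)).const_mul (2/c)).congr
              (Filter.Eventually.of_forall (fun x => by field_simp))).integrableOn
          · exact ((gaussInt s a hs).const_mul _).integrableOn
      _ ≤ (2/c) * 1 + (2*μ/c) * c := by
          apply add_le_add
          · refine mul_le_mul_of_nonneg_left ?_ (by positivity)
            rw [ftcPart s a m hs]
            exact Real.exp_le_one_iff.mpr
              (div_nonpos_of_nonpos_of_nonneg (neg_nonpos.mpr (sq_nonneg _)) (by positivity))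
          · refine mul_le_mul_of_nonneg_left ?_ (by positivity)
            calc (∫ b in Iic m, Real.exp (-(b - a)^2 / (2*s)))
                ≤ ∫ b : ℝ, Real.exp (-(b - a)^2 / (2*s)) :=
                  setIntegral_le_integral (gaussInt s a hs)
                    (Filter.Eventually.of_forall (fun x => (Real.exp_pos _).le))
              _ = c := gaussIntVal s a hs
      _ = 2 * (1/c + μ) := by field_simp
  · rw [MeasureTheory.integral_undef hFint]
    positivity

/-- For all `μ ≥ 0`, `y > 0` and `s > 0`,
`(1/y) ∫_{0}^{y} ∫_{-∞}^{m} exp(-μ b - μ² s/2) (2(2m-b)/(s √(2π s))) exp(-(2m-b)²/(2s)) db dm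
  ≤ 2 (1/√(2π s) + μ)`. -/
theorem stmt5 (μ y s : ℝ) (hμ : 0 ≤ μ) (hy : 0 < y) (hs : 0 < s) :
    (1/y) * ∫ m in Set.Ioo (0:ℝ) y, ∫ b in Set.Iio m,
        Real.exp (-μ * b - μ^2 * s / 2) *
          (2 * (2*m - b) / (s * Real.sqrt (2 * Real.pi * s))) *
          Real.exp (-(2*m - b)^2 / (2*s))
      ≤ 2 * (1 / Real.sqrt (2 * Real.pi * s) + μ) := by
  set c := Real.sqrt (2 * Real.pi * s) with hc
  have hcpos : 0 < c := Real.sqrt_pos.mpr (by positivity)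
  set C := 2 * (1/c + μ) with hC
  have hCnn : 0 ≤ C := by positivity
  set I : ℝ → ℝ := fun m => ∫ b in Set.Iio m,
      Real.exp (-μ * b - μ^2 * s / 2) * (2 * (2*m - b) / (s * c)) *
        Real.exp (-(2*m - b)^2 / (2*s)) with hI
  by_cases hint : IntegrableOn I (Set.Ioo 0 y)
  · have h1 : (∫ m in Set.Ioo (0:ℝ) y, I m) ≤ ∫ _ in Set.Ioo (0:ℝ) y, C :=
      setIntegral_mono_on hint
        (integrableOn_const measure_Ioo_lt_top.ne) measurableSet_Ioo
        (fun m hm => innerBound μ s m hμ hs hm.1)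
    have h2 : (∫ _ in Set.Ioo (0:ℝ) y, C) = y * C := by
      rw [setIntegral_const, volume_real_Ioo_of_le (by linarith), smul_eq_mul]
      ring_nf
    calc (1/y) * ∫ m in Set.Ioo (0:ℝ) y, I m ≤ (1/y) * (y * C) := by
          apply mul_le_mul_of_nonneg_left _ (by positivity)
          rw [← h2]; exact h1
      _ = C := by field_simp
  · rw [integral_undef hint]
    simpa using hCnn
end

section
/- Let f: [0, infinity) -> [0, 1] be non-increasing, and for q in (0,1] let lambda^{(q)} and lambda be the minimal non-decreasing right-continuous solutions (constructed as increasing limits of the iteration lambda^0 = 0, lambda^{n+1}_s = E[ integral from 0 to sup_{s' <= s} (B_{s'} + lambda^n_{s'}) of f(sqrt(q) x) dx ], respectively with q = 1) of lambda_s = E[ integral from 0 to sup_{s' <= s}(B_{s'} + lambda_{s'}) of f(sqrt(q) x) dx ] and lambda_s = E[ integral from 0 to sup_{s' <= s}(B_{s'} + lambda_{s'}) of f(x) dx ]. Then lambda^{(q)}_s >= lambda_s for all s, and by Brownian scaling lambda_{q s} >= sqrt(q) * lambda_s >= q * lambda_s; consequently lambda is superadditive in the weak sense lambda_s + lambda_{t-s}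 >= lambda_t for all 0 <= s <= t. -/
open MeasureTheory ProbabilityTheory Filter Set Topology

noncomputable section

/-- A standard one-dimensional Brownian motion (normalized to vanish at all times `t ≤ 0`). -/
def IsStdBM {Ω : Type*} [MeasureSpace Ω] (B : ℝ → Ω → ℝ) : Prop :=
  (∀ ω, ∀ t ≤ (0:ℝ), B t ω = 0) ∧
  (∀ t, Measurable (B t)) ∧
  (∀ ω, Continuous fun t => B t ω) ∧
  (∀ s t : ℝ, 0 ≤ s → s ≤ t →
    Measure.map (fun ω => B t ω - B s ω) ℙ = gaussianReal 0 (Real.toNNReal (t - s))) ∧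
  (∀ (n : ℕ) (u : Fin (n+1) → ℝ), Monotone u → (∀ i, 0 ≤ u i) →
    iIndepFun
      (fun i : Fin n => fun ω => B (u i.succ) ω - B (u i.castSucc) ω) ℙ)

namespace Stmt17Aux

lemma tele (k : ℕ) (c : Fin (k+2) → ℝ) (i : Fin (k+1)) :
    (∑ j : Fin (k+1), if (j:ℕ) ≤ (i:ℕ) then c j.succ - c j.castSucc else 0)
      = c i.succ - c 0 := by
  set g : ℕ → ℝ := fun j => if h : j < k+2 then c ⟨j, h⟩ else 0 with hgdef
  have hg : ∀ j : Fin (k+2), g (j : ℕ) = c j := fun j => by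
    simp [hgdef, j.2, Fin.eta]
  have step1 : (∑ j : Fin (k+1), if (j:ℕ) ≤ (i:ℕ) then c j.succ - c j.castSucc else 0)
      = ∑ j : Fin (k+1), (fun m => if m ≤ (i:ℕ) then g (m+1) - g m else 0) (j : ℕ) := by
    refine Finset.sum_congr rfl fun j _ => ?_
    have h1 : g ((j:ℕ)+1) = c j.succ := by
      have := hg j.succ; rwa [Fin.val_succ] at this
    have h2 : g (j:ℕ) = c j.castSucc := by
      have := hg j.castSucc; rwa [Fin.coe_castSucc] at this
    simp only [h1, h2]
  rw [step1, Fin.sum_univ_eq_sum_range (fun m => if m ≤ (i:ℕ) then g (m+1) - g m else 0) (k+1)]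
  have hsub : Finset.range ((i:ℕ)+1) ⊆ Finset.range (k+1) :=
    Finset.range_subset_range.2 (by omega)
  rw [← Finset.sum_subset hsub (fun x _ hx => by
    rw [if_neg]; intro hxi; exact hx (Finset.mem_range.2 (by omega)))]
  have heq : ∑ m ∈ Finset.range ((i:ℕ)+1), (if m ≤ (i:ℕ) then g (m+1) - g m else 0)
      = ∑ m ∈ Finset.range ((i:ℕ)+1), (g (m+1) - g m) := by
    refine Finset.sum_congr rfl fun m hm => ?_
    exact if_pos (by have := Finset.mem_range.1 hm; omega)
  rw [heq, Finset.sum_range_sub g ((i:ℕ)+1)]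
  have h1 : g ((i:ℕ)+1) = c i.succ := by
    have := hg i.succ; rwa [Fin.val_succ] at this
  have h2 : g 0 = c 0 := by
    have := hg 0; simpa using this
  rw [h1, h2]


def L (k : ℕ) (w : Fin (k+1) → ℝ) : Fin (k+1) → ℝ :=
  fun i => ∑ j : Fin (k+1), if (j:ℕ) ≤ (i:ℕ) then w j else 0

lemma measurable_L (k : ℕ) : Measurable (L k) := by
  refine measurable_pi_lambda _ fun i => ?_
  refine Finset.measurable_sum _ fun j _ => ?_
  by_cases h : (j:ℕ) ≤ (i:ℕ)
  · simpa [h] using measurable_pi_apply j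
  · simp [h]

lemma map_eq_pi {Ω : Type*} [MeasureSpace Ω] [IsProbabilityMeasure (ℙ : Measure Ω)]
    {m : ℕ} (X : Fin m → Ω → ℝ) (hX : ∀ i, Measurable (X i))
    (h : iIndepFun X ℙ) :
    Measure.map (fun ω i => X i ω) ℙ = Measure.pi fun i => Measure.map (X i) ℙ := by
  haveI : ∀ i, IsProbabilityMeasure (Measure.map (X i) ℙ) :=
    fun i => Measure.isProbabilityMeasure_map (hX i).aemeasurable
  refine (Measure.pi_eq fun s hs => ?_).symm
  rw [Measure.map_apply (measurable_pi_lambda _ hX) (MeasurableSet.univ_pi hs)]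
  have hpre : (fun ω i => X i ω) ⁻¹' (Set.pi Set.univ s) = ⋂ i, X i ⁻¹' s i := by
    ext ω; simp [Set.mem_pi]
  rw [hpre, h.meas_iInter (fun i => ⟨s i, hs i, rfl⟩)]
  exact Finset.prod_congr rfl fun i _ => (Measure.map_apply (hX i) (hs i)).symm


lemma exists_seq (s : ℝ) (hs : 0 ≤ s) :
    ∃ d : ℕ → ℝ, (∀ n, d n ∈ Set.Icc (0:ℝ) s) ∧
      ∀ x ∈ Set.Icc (0:ℝ) s, ∀ ε > (0:ℝ), ∃ n, x ≤ d n ∧ d n < x + ε := by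
  have e : ℕ ≃ ℚ := (Denumerable.eqv ℚ).symm
  refine ⟨fun n => Nat.rec s (fun m _ => min s (max 0 ((e m : ℚ) : ℝ))) n, fun n => ?_, ?_⟩
  · cases n with
    | zero => exact ⟨hs, le_rfl⟩
    | succ m => exact ⟨le_min hs (le_max_left _ _), min_le_left _ _⟩
  · intro x hx ε hε
    rcases eq_or_lt_of_le hx.2 with heq | hlt
    · refine ⟨0, by simp [heq], by simp [heq]; linarith⟩
    · have h1 : x < min s (x + ε) := lt_min hlt (by linarith)
      obtain ⟨r, hr1, hr2⟩ := exists_rat_btwn h1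
      refine ⟨e.symm r + 1, ?_, ?_⟩
      · simp only [Equiv.apply_symm_apply]
        have h0r : (0:ℝ) ≤ (r:ℝ) := le_trans hx.1 hr1.le
        rw [max_eq_right h0r, min_eq_right (le_of_lt (lt_of_lt_of_le hr2 (min_le_left _ _)))]
        exact hr1.le
      · simp only [Equiv.apply_symm_apply]
        calc min s (max 0 ((r:ℚ):ℝ)) ≤ max 0 ((r:ℚ):ℝ) := min_le_right _ _
          _ = (r:ℝ) := max_eq_right (le_trans hx.1 hr1.le)
          _ < x + ε := lt_of_lt_of_le hr2 (min_le_right _ _)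

lemma bdd_fam {s : ℝ} (hs : 0 ≤ s) {w c : ℝ → ℝ} (hw : Continuous w)
    (hc : MonotoneOn c (Set.Icc 0 s)) :
    ∃ M, ∀ x ∈ Set.Icc (0:ℝ) s, w x + c x ≤ M := by
  obtain ⟨M, hM⟩ := (isCompact_Icc.image_of_continuousOn hw.continuousOn).bddAbove
  exact ⟨M + c s, fun x hx => add_le_add (hM (mem_image_of_mem w hx))
    (hc hx ⟨hs, le_rfl⟩ hx.2)⟩

lemma sup_eq {s : ℝ} (hs : 0 ≤ s) {d : ℕ → ℝ} (hd1 : ∀ n, d n ∈ Set.Icc (0:ℝ) s)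
    (hd2 : ∀ x ∈ Set.Icc (0:ℝ) s, ∀ ε > (0:ℝ), ∃ n, x ≤ d n ∧ d n < x + ε)
    {w c : ℝ → ℝ} (hw : Continuous w) (hc : MonotoneOn c (Set.Icc 0 s)) :
    (⨆ s' : Set.Icc (0:ℝ) s, (w s' + c s')) = ⨆ n, (w (d n) + c (d n)) := by
  have hne : Nonempty (Set.Icc (0:ℝ) s) := ⟨⟨0, le_rfl, hs⟩⟩
  obtain ⟨M, hM⟩ := bdd_fam hs hw hc
  have bddF : BddAbove (Set.range fun s' : Set.Icc (0:ℝ) s => w s' + c s') :=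
    ⟨M, by rintro _ ⟨x, rfl⟩; exact hM x x.2⟩
  have bddD : BddAbove (Set.range fun n => w (d n) + c (d n)) :=
    ⟨M, by rintro _ ⟨n, rfl⟩; exact hM _ (hd1 n)⟩
  apply le_antisymm
  · refine ciSup_le fun x => ?_
    have hseq : ∀ m : ℕ, ∃ n, (x:ℝ) ≤ d n ∧ d n < x + 1/(m+1) :=
      fun m => hd2 x x.2 _ (by positivity)
    choose φ hφ1 hφ2 using hseq
    have hconv : Tendsto (fun m => d (φ m)) atTop (𝓝 (x:ℝ)) := by
      have h2 : Tendsto (fun m : ℕ => (x:ℝ) + 1/(m+1)) atTop (𝓝 ((x:ℝ) + 0)) :=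
        tendsto_const_nhds.add (tendsto_one_div_add_atTop_nhds_zero_nat)
      rw [add_zero] at h2
      exact tendsto_of_tendsto_of_tendsto_of_le_of_le tendsto_const_nhds h2
        hφ1 (fun m => (hφ2 m).le)
    have hlim : Tendsto (fun m => w (d (φ m)) + c x) atTop (𝓝 (w (x:ℝ) + c x)) :=
      ((hw.tendsto (x:ℝ)).comp hconv).add tendsto_const_nhds
    refine le_of_tendsto hlim (Eventually.of_forall fun m => ?_)
    calc w (d (φ m)) + c x ≤ w (d (φ m)) + c (d (φ m)) :=
          add_le_add le_rfl (hc x.2 (hd1 _) (hφ1 m))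
      _ ≤ ⨆ n, w (d n) + c (d n) := le_ciSup bddD (φ m)
  · exact ciSup_le fun n => le_ciSup_of_le bddF ⟨d n, hd1 n⟩ le_rfl


lemma fd {Ω : Type*} [MeasureSpace Ω] [IsProbabilityMeasure (ℙ : Measure Ω)]
    (B : ℝ → Ω → ℝ) (hB : IsStdBM B) {q : ℝ} (hq : q ∈ Set.Ioc (0:ℝ) 1)
    (k : ℕ) (u : Fin (k+1) → ℝ) (hu : Monotone u) (hu0 : ∀ i, 0 ≤ u i) :
    Measure.map (fun ω (i : Fin (k+1)) => Real.sqrt q * B (u i) ω) ℙ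
      = Measure.map (fun ω (i : Fin (k+1)) => B (q * u i) ω) ℙ := by
  obtain ⟨hB0, hBmeas, hBcont, hBgauss, hBindep⟩ := hB
  set u' : Fin (k+2) → ℝ := Fin.cons 0 u with hu'def
  have hu'z : u' 0 = 0 := rfl
  have hu's : ∀ i : Fin (k+1), u' i.succ = u i := fun i => by simp [hu'def]
  have hu'mono : Monotone u' := by
    refine Fin.monotone_iff_le_succ.2 fun i => ?_
    induction i using Fin.cases with
    | zero =>
      have : (0 : Fin (k+1)).castSucc = 0 := rfl
      rw [this, hu'z, hu's]
      exact hu0 0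
    | succ j =>
      rw [← Fin.succ_castSucc, hu's, hu's]
      exact hu (Fin.castSucc_le_succ j)
  have hu'0 : ∀ i, 0 ≤ u' i := by
    intro i
    induction i using Fin.cases with
    | zero => exact le_of_eq hu'z.symm
    | succ j => rw [hu's]; exact hu0 j
  have hq0 : (0:ℝ) ≤ q := hq.1.le
  -- increments
  set I : Fin (k+1) → Ω → ℝ := fun j ω => B (u' j.succ) ω - B (u' j.castSucc) ω with hIdef
  set IS : Fin (k+1) → Ω → ℝ := fun j ω => Real.sqrt q * I j ω with hISdef
  set IQ : Fin (k+1) → Ω → ℝ :=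
    fun j ω => B (q * u' j.succ) ω - B (q * u' j.castSucc) ω with hIQdef
  have hImeas : ∀ j, Measurable (I j) := fun j => (hBmeas _).sub (hBmeas _)
  have hISmeas : ∀ j, Measurable (IS j) := fun j => (hImeas j).const_mul _
  have hIQmeas : ∀ j, Measurable (IQ j) := fun j => (hBmeas _).sub (hBmeas _)
  have hSind : iIndepFun IS ℙ := by
    have := (hBindep (k+1) u' hu'mono hu'0).comp
      (fun _ (x : ℝ) => Real.sqrt q * x) (fun _ => measurable_const_mul _)
    exact this
  have hQind : iIndepFun IQ ℙ := by
    refine hBindep (k+1) (fun i => q * u' i) (fun i j hij => ?_) (fun i => mul_nonneg hq0 (hu'0 i))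
    exact mul_le_mul_of_nonneg_left (hu'mono hij) hq0
  -- marginals agree
  have hmarg : ∀ j, Measure.map (IS j) ℙ = Measure.map (IQ j) ℙ := by
    intro j
    have hle : u' j.castSucc ≤ u' j.succ := hu'mono (Fin.castSucc_le_succ j)
    have h1 : Measure.map (I j) ℙ
        = gaussianReal 0 (Real.toNNReal (u' j.succ - u' j.castSucc)) :=
      hBgauss _ _ (hu'0 _) hle
    have h2 : Measure.map (IQ j) ℙ
        = gaussianReal 0 (Real.toNNReal (q * u' j.succ - q * u' j.castSucc)) :=
      hBgauss _ _ (mul_nonneg hq0 (hu'0 _)) (mul_le_mul_of_nonneg_left hle hq0)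
    have h3 : Measure.map (IS j) ℙ
        = Measure.map (fun x => Real.sqrt q * x) (Measure.map (I j) ℙ) := by
      rw [Measure.map_map (measurable_const_mul _) (hImeas j)]
      rfl
    rw [h3, h1, h2]
    have h4 := gaussianReal_map_const_mul (μ := 0)
      (v := Real.toNNReal (u' j.succ - u' j.castSucc)) (Real.sqrt q)
    rw [show (fun x => Real.sqrt q * x) = (Real.sqrt q * ·) from rfl, h4]
    congr 1
    · simp
    · ext
      push_cast
      rw [Real.sq_sqrt hq0, Real.coe_toNNReal', Real.coe_toNNReal', ← mul_sub,
        mul_max_of_nonneg _ _ hq0, mul_zero]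
  -- joint increments agree
  have hjoint : Measure.map (fun ω j => IS j ω) ℙ = Measure.map (fun ω j => IQ j ω) ℙ := by
    rw [map_eq_pi IS hISmeas hSind, map_eq_pi IQ hIQmeas hQind]
    exact congrArg _ (funext fun j => hmarg j)
  -- positions as partial sums
  have hB00 : ∀ ω, B 0 ω = 0 := fun ω => hB0 ω 0 le_rfl
  have hposS : (fun ω (i : Fin (k+1)) => Real.sqrt q * B (u i) ω)
      = (L k) ∘ (fun ω j => IS j ω) := by
    funext ω
    funext i
    show Real.sqrt q * B (u i) ω = ∑ j : Fin (k+1), if (j:ℕ) ≤ (i:ℕ) then IS j ω else 0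
    have ht := tele k (fun j => Real.sqrt q * B (u' j) ω) i
    have : ∀ j : Fin (k+1), IS j ω
        = Real.sqrt q * B (u' j.succ) ω - Real.sqrt q * B (u' j.castSucc) ω := by
      intro j; simp [hISdef, hIdef, mul_sub]
    calc Real.sqrt q * B (u i) ω
        = Real.sqrt q * B (u' i.succ) ω - Real.sqrt q * B (u' 0) ω := by
          rw [hu's, hu'z, hB00, mul_zero, sub_zero]
      _ = ∑ j : Fin (k+1), if (j:ℕ) ≤ (i:ℕ)
            then Real.sqrt q * B (u' j.succ) ω - Real.sqrt q * B (u' j.castSucc) ω else 0 :=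
          ht.symm
      _ = ∑ j : Fin (k+1), if (j:ℕ) ≤ (i:ℕ) then IS j ω else 0 := by
          refine Finset.sum_congr rfl fun j _ => ?_
          rw [this j]
  have hposQ : (fun ω (i : Fin (k+1)) => B (q * u i) ω)
      = (L k) ∘ (fun ω j => IQ j ω) := by
    funext ω
    funext i
    show B (q * u i) ω = ∑ j : Fin (k+1), if (j:ℕ) ≤ (i:ℕ) then IQ j ω else 0
    have ht := tele k (fun j => B (q * u' j) ω) i
    calc B (q * u i) ω
        = B (q * u' i.succ) ω - B (q * u' 0) ω := by
          rw [hu's, hu'z, mul_zero, hB00, sub_zero]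
      _ = ∑ j : Fin (k+1), if (j:ℕ) ≤ (i:ℕ)
            then B (q * u' j.succ) ω - B (q * u' j.castSucc) ω else 0 := ht.symm
      _ = ∑ j : Fin (k+1), if (j:ℕ) ≤ (i:ℕ) then IQ j ω else 0 := rfl
  rw [hposS, hposQ, ← Measure.map_map (measurable_L k) (measurable_pi_lambda _ hISmeas),
    ← Measure.map_map (measurable_L k) (measurable_pi_lambda _ hIQmeas), hjoint]


lemma law_sup {Ω : Type*} [MeasureSpace Ω] [IsProbabilityMeasure (ℙ : Measure Ω)]
    (B : ℝ → Ω → ℝ) (hB : IsStdBM B) {q : ℝ} (hq : q ∈ Set.Ioc (0:ℝ) 1)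
    {s : ℝ} (hs : 0 ≤ s) {g : ℝ → ℝ} (hg : MonotoneOn g (Set.Icc 0 s)) :
    Measure.map (fun ω => ⨆ s' : Set.Icc (0:ℝ) s,
        (Real.sqrt q * B (s':ℝ) ω + g (s':ℝ))) ℙ
      = Measure.map (fun ω => ⨆ s' : Set.Icc (0:ℝ) s,
        (B (q * (s':ℝ)) ω + g (s':ℝ))) ℙ := by
  obtain ⟨d, hd1, hd2⟩ := exists_seq s hs
  have hBmeas := hB.2.1
  have hBcont := hB.2.2.1
  set X : ℕ → Ω → ℝ := fun n ω => Real.sqrt q * B (d n) ω + g (d n) with hX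
  set Y : ℕ → Ω → ℝ := fun n ω => B (q * d n) ω + g (d n) with hY
  have hXmeas : ∀ n, Measurable (X n) := fun n => ((hBmeas _).const_mul _).add_const _
  have hYmeas : ∀ n, Measurable (Y n) := fun n => (hBmeas _).add_const _
  have hZX : (fun ω => ⨆ s' : Set.Icc (0:ℝ) s, (Real.sqrt q * B (s':ℝ) ω + g (s':ℝ)))
      = fun ω => ⨆ n, X n ω :=
    funext fun ω => sup_eq hs hd1 hd2 (continuous_const.mul (hBcont ω)) hg
  have hZY : (fun ω => ⨆ s' : Set.Icc (0:ℝ) s, (B (q * (s':ℝ)) ω + g (s':ℝ)))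
      = fun ω => ⨆ n, Y n ω :=
    funext fun ω => sup_eq hs hd1 hd2 ((hBcont ω).comp (continuous_mul_left q)) hg
  rw [hZX, hZY]
  have hZXm : Measurable fun ω => ⨆ n, X n ω := Measurable.iSup hXmeas
  have hZYm : Measurable fun ω => ⨆ n, Y n ω := Measurable.iSup hYmeas
  haveI := Measure.isProbabilityMeasure_map (μ := ℙ) hZXm.aemeasurable
  haveI := Measure.isProbabilityMeasure_map (μ := ℙ) hZYm.aemeasurable
  refine Measure.ext_of_Iic _ _ fun a => ?_
  rw [Measure.map_apply hZXm measurableSet_Iic, Measure.map_apply hZYm measurableSet_Iic]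
  have hbX : ∀ ω, BddAbove (Set.range fun n => X n ω) := fun ω => by
    obtain ⟨M, hM⟩ := bdd_fam hs (continuous_const.mul (hBcont ω)) hg
    exact ⟨M, by rintro _ ⟨n, rfl⟩; exact hM _ (hd1 n)⟩
  have hbY : ∀ ω, BddAbove (Set.range fun n => Y n ω) := fun ω => by
    obtain ⟨M, hM⟩ := bdd_fam hs ((hBcont ω).comp (continuous_mul_left q)) hg
    exact ⟨M, by rintro _ ⟨n, rfl⟩; exact hM _ (hd1 n)⟩
  have hsetX : (fun ω => ⨆ n, X n ω) ⁻¹' (Set.Iic a)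
      = ⋂ (k : ℕ), ⋂ (n : Fin (k+1)), {ω | X (n:ℕ) ω ≤ a} := by
    ext ω
    simp only [mem_preimage, mem_Iic, mem_iInter, mem_setOf_eq]
    exact ⟨fun h k n => le_trans (le_ciSup (hbX ω) (n:ℕ)) h,
      fun h => ciSup_le fun n => h n ⟨n, Nat.lt_succ_self n⟩⟩
  have hsetY : (fun ω => ⨆ n, Y n ω) ⁻¹' (Set.Iic a)
      = ⋂ (k : ℕ), ⋂ (n : Fin (k+1)), {ω | Y (n:ℕ) ω ≤ a} := by
    ext ω
    simp only [mem_preimage, mem_Iic, mem_iInter, mem_setOf_eq]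
    exact ⟨fun h k n => le_trans (le_ciSup (hbY ω) (n:ℕ)) h,
      fun h => ciSup_le fun n => h n ⟨n, Nat.lt_succ_self n⟩⟩
  rw [hsetX, hsetY]
  have hantiX : Antitone (fun k : ℕ => ⋂ n : Fin (k+1), {ω | X (n:ℕ) ω ≤ a}) := by
    intro k k' hkk' ω hω
    simp only [mem_iInter, mem_setOf_eq] at hω ⊢
    intro n
    exact hω ⟨(n:ℕ), by omega⟩
  have hantiY : Antitone (fun k : ℕ => ⋂ n : Fin (k+1), {ω | Y (n:ℕ) ω ≤ a}) := by
    intro k k' hkk' ω hω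
    simp only [mem_iInter, mem_setOf_eq] at hω ⊢
    intro n
    exact hω ⟨(n:ℕ), by omega⟩
  rw [hantiX.measure_iInter
      (fun k => (MeasurableSet.iInter fun n =>
        measurableSet_le (hXmeas _) measurable_const).nullMeasurableSet)
      ⟨0, measure_ne_top _ _⟩,
    hantiY.measure_iInter
      (fun k => (MeasurableSet.iInter fun n =>
        measurableSet_le (hYmeas _) measurable_const).nullMeasurableSet)
      ⟨0, measure_ne_top _ _⟩]
  refine iInf_congr fun k => ?_
  set v : Fin (k+1) → ℝ := fun i => d i with hv
  set σ : Equiv.Perm (Fin (k+1)) := Tuple.sort v with hσ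
  have husort : Monotone (v ∘ σ) := Tuple.monotone_sort v
  have hfd := fd B hB hq k (v ∘ σ) husort (fun i => (hd1 _).1)
  set S : Set (Fin (k+1) → ℝ) :=
    ⋂ n : Fin (k+1), (fun w : Fin (k+1) → ℝ => w (σ.symm n)) ⁻¹' (Set.Iic (a - g (d n))) with hS
  have hSm : MeasurableSet S :=
    MeasurableSet.iInter fun n => (measurable_pi_apply _) measurableSet_Iic
  have hvecX : Measurable (fun ω (i : Fin (k+1)) => Real.sqrt q * B ((v ∘ σ) i) ω) :=
    measurable_pi_lambda _ fun i => (hBmeas _).const_mul _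
  have hvecY : Measurable (fun ω (i : Fin (k+1)) => B (q * (v ∘ σ) i) ω) :=
    measurable_pi_lambda _ fun i => hBmeas _
  have hXeq : (⋂ n : Fin (k+1), {ω | X (n:ℕ) ω ≤ a})
      = (fun ω (i : Fin (k+1)) => Real.sqrt q * B ((v ∘ σ) i) ω) ⁻¹' S := by
    ext ω
    simp only [hS, mem_iInter, mem_setOf_eq, mem_preimage, Function.comp_apply,
      Equiv.apply_symm_apply, mem_Iic]
    constructor
    · intro h n; exact le_sub_iff_add_le.2 (h n)
    · intro h n; exact le_sub_iff_add_le.1 (h n)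
  have hYeq : (⋂ n : Fin (k+1), {ω | Y (n:ℕ) ω ≤ a})
      = (fun ω (i : Fin (k+1)) => B (q * (v ∘ σ) i) ω) ⁻¹' S := by
    ext ω
    simp only [hS, mem_iInter, mem_setOf_eq, mem_preimage, Function.comp_apply,
      Equiv.apply_symm_apply, mem_Iic]
    constructor
    · intro h n; exact le_sub_iff_add_le.2 (h n)
    · intro h n; exact le_sub_iff_add_le.1 (h n)
  rw [hXeq, hYeq, ← Measure.map_apply hvecX hSm, ← Measure.map_apply hvecY hSm, hfd]


variable {f : ℝ → ℝ}

/-- `Hf f c t = ∫_{(0,t)} f (c ⬝ x) dx`, written with `max` so the integrand is globally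
antitone. -/
def Hf (f : ℝ → ℝ) (c t : ℝ) : ℝ := ∫ x in Set.Ioo (0:ℝ) t, f (c * max x 0)

lemma Hf_eq (f : ℝ → ℝ) (c T : ℝ) :
    (∫ x in Set.Ioo (0:ℝ) T, f (c * x)) = Hf f c T :=
  setIntegral_congr_fun measurableSet_Ioo fun x hx => by
    simp only [max_eq_left hx.1.le]

section props

variable (hf01 : ∀ x : ℝ, 0 ≤ x → f x ∈ Set.Icc (0:ℝ) 1)
  (hfmono : ∀ x y : ℝ, 0 ≤ x → x ≤ y → f y ≤ f x)

include hf01 hfmono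

lemma F_anti {c : ℝ} (hc : 0 ≤ c) : Antitone fun x => f (c * max x 0) := by
  intro x y hxy
  exact hfmono _ _ (mul_nonneg hc (le_max_right _ _))
    (mul_le_mul_of_nonneg_left (max_le_max hxy le_rfl) hc)

lemma F_mem {c : ℝ} (hc : 0 ≤ c) (x : ℝ) : f (c * max x 0) ∈ Set.Icc (0:ℝ) 1 :=
  hf01 _ (mul_nonneg hc (le_max_right _ _))

lemma F_integrableOn {c : ℝ} (hc : 0 ≤ c) (a b : ℝ) (S : Set ℝ) (hS : S ⊆ Set.Icc a b)
    (hSm : MeasurableSet S) : IntegrableOn (fun x => f (c * max x 0)) S := by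
  refine Measure.integrableOn_of_bounded (M := 1) ?_ ?_ ?_
  · exact ((measure_mono hS).trans_lt measure_Icc_lt_top).ne
  · exact ((F_anti hf01 hfmono hc).measurable).aestronglyMeasurable
  · refine Eventually.of_forall fun x => ?_
    have := F_mem hf01 hfmono hc x
    rw [Real.norm_eq_abs, abs_le]
    exact ⟨by linarith [this.1], this.2⟩

lemma Hf_nonneg {c : ℝ} (hc : 0 ≤ c) (t : ℝ) : 0 ≤ Hf f c t :=
  setIntegral_nonneg measurableSet_Ioo fun x _ => (F_mem hf01 hfmono hc x).1

lemma Hf_mono {c : ℝ} (hc : 0 ≤ c) : Monotone (Hf f c) := by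
  intro a b hab
  refine setIntegral_mono_set
    (F_integrableOn hf01 hfmono hc 0 b (Set.Ioo 0 b) (Set.Ioo_subset_Icc_self) measurableSet_Ioo)
    (Eventually.of_forall fun x => (F_mem hf01 hfmono hc x).1)
    (HasSubset.Subset.eventuallyLE (Set.Ioo_subset_Ioo_right hab))

lemma Hf_lip {c : ℝ} (hc : 0 ≤ c) {a b : ℝ} (hab : a ≤ b) :
    Hf f c b ≤ Hf f c a + (b - a) := by
  have hH0 : ∀ t : ℝ, t ≤ 0 → Hf f c t = 0 := by
    intro t ht
    rw [Hf, Set.Ioo_eq_empty (by intro h; exact absurd (h.trans_le ht) (lt_irrefl 0))]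
    simp
  have hbound : ∀ (S : Set ℝ) (u v : ℝ), S ⊆ Set.Icc u v → MeasurableSet S →
      (∫ x in S, f (c * max x 0)) ≤ (volume S).toReal := by
    intro S u v hSsub hSm
    calc (∫ x in S, f (c * max x 0)) ≤ ∫ _x in S, (1:ℝ) :=
          setIntegral_mono_on (F_integrableOn hf01 hfmono hc u v S hSsub hSm)
            (integrableOn_const ((measure_mono hSsub).trans_lt measure_Icc_lt_top).ne)
            hSm (fun x _ => (F_mem hf01 hfmono hc x).2)
      _ = (volume S).toReal := by simp; rfl
  rcases le_or_gt b 0 with hb | hb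
  · rw [hH0 b hb, hH0 a (hab.trans hb)]
    linarith
  rcases le_or_gt a 0 with ha | ha
  · rw [hH0 a ha]
    have : Hf f c b ≤ (volume (Set.Ioo (0:ℝ) b)).toReal :=
      hbound _ 0 b Set.Ioo_subset_Icc_self measurableSet_Ioo
    rw [Real.volume_Ioo, ENNReal.toReal_ofReal (by linarith)] at this
    linarith
  · have hsplit : Set.Ioo (0:ℝ) a ∪ Set.Ico a b = Set.Ioo 0 b :=
      Set.Ioo_union_Ico_eq_Ioo ha hab
    have hdisj : Disjoint (Set.Ioo (0:ℝ) a) (Set.Ico a b) := by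
      rw [Set.disjoint_left]
      rintro x ⟨_, h2⟩ ⟨h3, _⟩
      exact absurd h3 (not_le.2 h2)
    have : Hf f c b = Hf f c a + ∫ x in Set.Ico a b, f (c * max x 0) := by
      rw [Hf, ← hsplit, setIntegral_union hdisj measurableSet_Ico
        (F_integrableOn hf01 hfmono hc 0 a _ Set.Ioo_subset_Icc_self measurableSet_Ioo)
        (F_integrableOn hf01 hfmono hc a b _ Set.Ico_subset_Icc_self measurableSet_Ico)]
      rfl
    rw [this]
    have h2 : (∫ x in Set.Ico a b, f (c * max x 0)) ≤ (volume (Set.Ico a b)).toReal :=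
      hbound _ a b Set.Ico_subset_Icc_self measurableSet_Ico
    rw [Real.volume_Ico, ENNReal.toReal_ofReal (by linarith)] at h2
    linarith

lemma Hf_cont {c : ℝ} (hc : 0 ≤ c) : Continuous (Hf f c) := by
  have : LipschitzWith 1 (Hf f c) := by
    refine LipschitzWith.of_dist_le_mul fun x y => ?_
    rw [NNReal.coe_one, one_mul, Real.dist_eq, Real.dist_eq, abs_le]
    rcases le_total x y with h | h
    · have h1 := Hf_lip hf01 hfmono hc h
      have h2 := Hf_mono hf01 hfmono hc h
      rw [abs_of_nonpos (by linarith)]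
      constructor <;> linarith
    · have h1 := Hf_lip hf01 hfmono hc h
      have h2 := Hf_mono hf01 hfmono hc h
      rw [abs_of_nonneg (by linarith)]
      constructor <;> linarith
  exact this.continuous

lemma Hf_scale {c : ℝ} (hc : 0 < c) (t : ℝ) : Hf f c t = c⁻¹ * Hf f 1 (c * t) := by
  rcases le_or_gt t 0 with ht | ht
  · have h1 : Set.Ioo (0:ℝ) t = ∅ := Set.Ioo_eq_empty (by intro h; exact absurd (h.trans_le ht) (lt_irrefl 0))
    have h2 : Set.Ioo (0:ℝ) (c*t) = ∅ := Set.Ioo_eq_empty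
      (by intro h; exact absurd (h.trans_le (mul_nonpos_of_nonneg_of_nonpos hc.le ht)) (lt_irrefl 0))
    rw [Hf, Hf, h1, h2]
    simp
  · have e1 : Hf f c t = ∫ x in Set.Ioo (0:ℝ) t, f (c * x) := (Hf_eq f c t).symm
    have e2 : Hf f 1 (c*t) = ∫ x in Set.Ioo (0:ℝ) (c*t), f x := by
      rw [← Hf_eq f 1 (c*t)]
      simp only [one_mul]
    rw [e1, e2]
    rw [← integral_Ioc_eq_integral_Ioo, ← integral_Ioc_eq_integral_Ioo,
      ← intervalIntegral.integral_of_le ht.le,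
      ← intervalIntegral.integral_of_le (by positivity : (0:ℝ) ≤ c*t)]
    rw [intervalIntegral.integral_comp_mul_left (fun x => f x) hc.ne', mul_zero]
    simp [smul_eq_mul]

lemma Hf_anti_c {c c' : ℝ} (hc : 0 ≤ c) (hcc' : c ≤ c') (t : ℝ) :
    Hf f c' t ≤ Hf f c t := by
  refine setIntegral_mono_on
    (F_integrableOn hf01 hfmono (hc.trans hcc') 0 t _ Set.Ioo_subset_Icc_self measurableSet_Ioo)
    (F_integrableOn hf01 hfmono hc 0 t _ Set.Ioo_subset_Icc_self measurableSet_Ioo)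
    measurableSet_Ioo fun x _ => ?_
  exact hfmono _ _ (mul_nonneg hc (le_max_right _ _))
    (mul_le_mul_of_nonneg_right hcc' (le_max_right _ _))

end props


lemma sup_reindex {q s : ℝ} (hq : 0 < q) (F : ℝ → ℝ) :
    (⨆ s' : Set.Icc (0:ℝ) s, F (q * (s':ℝ))) = ⨆ u : Set.Icc (0:ℝ) (q*s), F (u:ℝ) := by
  have hr : Set.range (fun s' : Set.Icc (0:ℝ) s => F (q * (s':ℝ)))
      = Set.range (fun u : Set.Icc (0:ℝ) (q*s) => F (u:ℝ)) := by
    ext y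
    constructor
    · rintro ⟨⟨x, hx⟩, rfl⟩
      exact ⟨⟨q*x, mul_nonneg hq.le hx.1, mul_le_mul_of_nonneg_left hx.2 hq.le⟩, rfl⟩
    · rintro ⟨⟨u, hu⟩, rfl⟩
      refine ⟨⟨u/q, div_nonneg hu.1 hq.le, (div_le_iff₀ hq).2 (by rw [mul_comm]; exact hu.2)⟩, ?_⟩
      show F (q * (u/q)) = F u
      rw [mul_comm q, div_mul_cancel₀ _ hq.ne']
  rw [iSup, iSup, hr]


end Stmt17Aux

open Stmt17Aux

/-- Superadditivity of the minimal probabilistic solution of the one-phase supercooled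
Stefan problem with non-increasing initial density `f : [0,∞) → [0,1]`. For `q ∈ (0,1]`,
`lam q` is the minimal non-decreasing right-continuous solution of
`λ_s = E[∫₀^{sup_{s'≤s}(B_{s'}+λ_{s'})} f(√q x) dx]`, constructed as the increasing limit of
the iterates `it q` (starting from `0`). Then `lam q ≥ lam 1`, by Brownian scaling
`lam 1 (q s) ≥ √q lam 1 s ≥ q lam 1 s`, and consequently `λ := lam 1` is weakly
superadditive: `λ_s + λ_{t-s} ≥ λ_t` for `0 ≤ s ≤ t`. -/
theorem stmt17 {Ω : Type*} [MeasureSpace Ω] [IsProbabilityMeasure (ℙ : Measure Ω)]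
    (B : ℝ → Ω → ℝ) (hB : IsStdBM B)
    (f : ℝ → ℝ) (hf01 : ∀ x : ℝ, 0 ≤ x → f x ∈ Set.Icc (0:ℝ) 1)
    (hfmono : ∀ x y : ℝ, 0 ≤ x → x ≤ y → f y ≤ f x)
    (lam : ℝ → ℝ → ℝ) (it : ℝ → ℕ → ℝ → ℝ)
    -- the iteration defining the minimal solution
    (hit0 : ∀ q s, it q 0 s = 0)
    (hitrec : ∀ q ∈ Set.Ioc (0:ℝ) 1, ∀ (n : ℕ), ∀ s : ℝ, 0 ≤ s →
      it q (n+1) s = ∫ ω, ∫ x in Set.Ioo (0:ℝ)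
          (⨆ s' : Set.Icc (0:ℝ) s, (B (s':ℝ) ω + it q n (s':ℝ))),
        f (Real.sqrt q * x))
    (hlim : ∀ q ∈ Set.Ioc (0:ℝ) 1, ∀ s : ℝ, 0 ≤ s →
      Tendsto (fun n => it q n s) atTop (nhds (lam q s)))
    -- `lam q` is a non-decreasing right-continuous solution
    (hmono : ∀ q ∈ Set.Ioc (0:ℝ) 1, MonotoneOn (lam q) (Set.Ici 0))
    (hrc : ∀ q ∈ Set.Ioc (0:ℝ) 1, ∀ s : ℝ, 0 ≤ s →
      ContinuousWithinAt (lam q) (Set.Ici s) s)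
    (hsol : ∀ q ∈ Set.Ioc (0:ℝ) 1, ∀ s : ℝ, 0 ≤ s →
      lam q s = ∫ ω, ∫ x in Set.Ioo (0:ℝ)
          (⨆ s' : Set.Icc (0:ℝ) s, (B (s':ℝ) ω + lam q (s':ℝ))),
        f (Real.sqrt q * x))
    -- minimality of `lam q`
    (hmin : ∀ q ∈ Set.Ioc (0:ℝ) 1, ∀ μ : ℝ → ℝ, MonotoneOn μ (Set.Ici 0) →
      (∀ s : ℝ, 0 ≤ s → μ s = ∫ ω, ∫ x in Set.Ioo (0:ℝ)
          (⨆ s' : Set.Icc (0:ℝ) s, (B (s':ℝ) ω + μ (s':ℝ))),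
        f (Real.sqrt q * x)) →
      ∀ s : ℝ, 0 ≤ s → lam q s ≤ μ s) :
    (∀ q ∈ Set.Ioc (0:ℝ) 1, ∀ s : ℝ, 0 ≤ s → lam 1 s ≤ lam q s)
    ∧ (∀ q ∈ Set.Ioc (0:ℝ) 1, ∀ s : ℝ, 0 ≤ s →
        q * lam 1 s ≤ Real.sqrt q * lam 1 s ∧ Real.sqrt q * lam 1 s ≤ lam 1 (q * s))
    ∧ (∀ s t : ℝ, 0 ≤ s → s ≤ t → lam 1 t ≤ lam 1 s + lam 1 (t - s)) := by
  have h1mem : (1:ℝ) ∈ Set.Ioc (0:ℝ) 1 := ⟨one_pos, le_rfl⟩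
  have hBmeas := hB.2.1
  have hBcont := hB.2.2.1
  have hB00 : ∀ ω, B 0 ω = 0 := fun ω => hB.1 ω 0 le_rfl
  -- iterates vanish at time 0
  have hit_zero : ∀ q ∈ Set.Ioc (0:ℝ) 1, ∀ n, it q n 0 = 0 := by
    intro q hq n
    induction n with
    | zero => exact hit0 q 0
    | succ n ih =>
      rw [hitrec q hq n 0 le_rfl]
      haveI : Nonempty (Set.Icc (0:ℝ) 0) := ⟨⟨0, le_rfl, le_rfl⟩⟩
      have hsup : ∀ ω : Ω, (⨆ s' : Set.Icc (0:ℝ) 0, (B (s':ℝ) ω + it q n (s':ℝ))) = 0 := by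
        intro ω
        have hval : ∀ s' : Set.Icc (0:ℝ) 0, B (s':ℝ) ω + it q n (s':ℝ) = 0 := by
          rintro ⟨x, hx1, hx2⟩
          have hx0 : x = 0 := le_antisymm hx2 hx1
          subst hx0
          rw [hB00, ih, add_zero]
        calc (⨆ s' : Set.Icc (0:ℝ) 0, (B (s':ℝ) ω + it q n (s':ℝ)))
            = ⨆ _s' : Set.Icc (0:ℝ) 0, (0:ℝ) := iSup_congr hval
          _ = 0 := ciSup_const
      simp only [hsup, Set.Ioo_self, Measure.restrict_empty, integral_zero_measure,
        integral_zero]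
  have hlam_zero : ∀ q ∈ Set.Ioc (0:ℝ) 1, lam q 0 = 0 := fun q hq =>
    tendsto_nhds_unique (hlim q hq 0 le_rfl)
      (by simp only [hit_zero q hq]; exact tendsto_const_nhds)
  have hlam_nonneg : ∀ q ∈ Set.Ioc (0:ℝ) 1, ∀ s, 0 ≤ s → 0 ≤ lam q s := by
    intro q hq s hs
    rw [← hlam_zero q hq]
    exact hmono q hq Set.self_mem_Ici hs hs
  -- measurability of the running supremum against a monotone profile
  have hsupA : ∀ (s : ℝ), 0 ≤ s → ∀ c : ℝ → ℝ, MonotoneOn c (Set.Icc 0 s) →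
      Measurable (fun ω => ⨆ s' : Set.Icc (0:ℝ) s, (B (s':ℝ) ω + c (s':ℝ))) := by
    intro s hs c hc
    obtain ⟨d, hd1, hd2⟩ := exists_seq s hs
    have heq : (fun ω => ⨆ s' : Set.Icc (0:ℝ) s, (B (s':ℝ) ω + c (s':ℝ)))
        = fun ω => ⨆ n, (B (d n) ω + c (d n)) :=
      funext fun ω => sup_eq hs hd1 hd2 (hBcont ω) hc
    rw [heq]
    exact Measurable.iSup fun n => (hBmeas _).add_const _
  have hbddA : ∀ (s : ℝ), 0 ≤ s → ∀ c : ℝ → ℝ, MonotoneOn c (Set.Icc 0 s) → ∀ ω : Ω,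
      BddAbove (Set.range fun s' : Set.Icc (0:ℝ) s => B (s':ℝ) ω + c (s':ℝ)) := by
    intro s hs c hc ω
    obtain ⟨M, hM⟩ := bdd_fam hs (hBcont ω) hc
    exact ⟨M, by rintro _ ⟨x, rfl⟩; exact hM _ x.2⟩
  have hit_nonneg : ∀ q ∈ Set.Ioc (0:ℝ) 1, ∀ n s, 0 ≤ s → 0 ≤ it q n s := by
    intro q hq n
    cases n with
    | zero => intro s _; rw [hit0]
    | succ n =>
      intro s hs
      rw [hitrec q hq n s hs]
      refine integral_nonneg fun ω => ?_
      exact setIntegral_nonneg measurableSet_Ioo fun x hx =>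
        (hf01 _ (mul_nonneg (Real.sqrt_nonneg q) hx.1.le)).1
  -- comparison of the iterates at level 1 with `lam q`
  have key1 : ∀ q ∈ Set.Ioc (0:ℝ) 1, ∀ n s, 0 ≤ s → it 1 n s ≤ lam q s := by
    intro q hq n
    induction n with
    | zero =>
      intro s hs; rw [hit0]; exact hlam_nonneg q hq s hs
    | succ n ih =>
      intro s hs
      have hsq0 : (0:ℝ) ≤ Real.sqrt q := Real.sqrt_nonneg q
      have hsqpos : 0 < Real.sqrt q := Real.sqrt_pos.2 hq.1
      have hsqle1 : Real.sqrt q ≤ 1 := by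
        rw [show (1:ℝ) = Real.sqrt 1 from (Real.sqrt_one).symm]
        exact Real.sqrt_le_sqrt hq.2
      have hlmono : MonotoneOn (lam q) (Set.Icc 0 s) := (hmono q hq).mono fun x hx => hx.1
      set A : Ω → ℝ := fun ω => ⨆ s' : Set.Icc (0:ℝ) s, (B (s':ℝ) ω + lam q (s':ℝ)) with hA
      have hAmeas : Measurable A := hsupA s hs _ hlmono
      have hsol' : lam q s = ∫ ω, Hf f (Real.sqrt q) (A ω) := by
        rw [hsol q hq s hs]
        simp only [Hf_eq, hA]
      set Ait : Ω → ℝ := fun ω => ⨆ s' : Set.Icc (0:ℝ) s, (B (s':ℝ) ω + it 1 n (s':ℝ))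
        with hAit
      have hitform : it 1 (n+1) s = ∫ ω, Hf f 1 (Ait ω) := by
        rw [hitrec 1 h1mem n s hs]
        simp only [Real.sqrt_one, Hf_eq, hAit]
      have hAle : ∀ ω, Ait ω ≤ A ω := fun ω =>
        ciSup_mono (hbddA s hs _ hlmono ω) fun s' => add_le_add le_rfl (ih (s':ℝ) s'.2.1)
      have hptle : ∀ ω, Hf f 1 (Ait ω) ≤ Hf f (Real.sqrt q) (A ω) := fun ω =>
        le_trans (Hf_mono hf01 hfmono zero_le_one (hAle ω))
          (Hf_anti_c hf01 hfmono hsq0 hsqle1 _)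
      by_cases hGint : Integrable (fun ω => Hf f (Real.sqrt q) (A ω))
      · rw [hitform, hsol']
        exact integral_mono_of_nonneg
          (Eventually.of_forall fun ω => Hf_nonneg hf01 hfmono zero_le_one _)
          hGint (Eventually.of_forall hptle)
      · have hlam0 : lam q s = 0 := by rw [hsol']; exact integral_undef hGint
        have hzero : ∀ u, u ∈ Set.Icc (0:ℝ) s → lam q u = 0 := fun u hu =>
          le_antisymm (hlam0 ▸ hmono q hq hu.1 hs hu.2) (hlam_nonneg q hq u hu.1)
        have hitz : ∀ u, u ∈ Set.Icc (0:ℝ) s → it 1 n u = 0 := fun u hu =>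
          le_antisymm (le_trans (ih u hu.1) (le_of_eq (hzero u hu)))
            (hit_nonneg 1 h1mem n u hu.1)
        have hAeq : Ait = A := by
          funext ω
          exact iSup_congr fun s' => by rw [hitz (s':ℝ) s'.2, hzero (s':ℝ) s'.2]
        have hA0 : ∀ ω, 0 ≤ A ω := by
          intro ω
          have h0mem : (0:ℝ) ∈ Set.Icc (0:ℝ) s := ⟨le_rfl, hs⟩
          have hle := le_ciSup (hbddA s hs _ hlmono ω) (⟨0, h0mem⟩ : Set.Icc (0:ℝ) s)
          calc (0:ℝ) = B 0 ω + lam q 0 := by rw [hB00, hlam_zero q hq, add_zero]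
            _ ≤ A ω := hle
        have hnint : ¬ Integrable (fun ω => Hf f 1 (Ait ω)) := by
          intro hint
          apply hGint
          have hsm : Measurable fun ω => Hf f 1 (Real.sqrt q * A ω) :=
            (Hf_cont hf01 hfmono zero_le_one).measurable.comp (hAmeas.const_mul _)
          rw [hAeq] at hint
          have hint2 : Integrable fun ω => Hf f 1 (Real.sqrt q * A ω) := by
            refine hint.mono' hsm.aestronglyMeasurable (Eventually.of_forall fun ω => ?_)
            rw [Real.norm_eq_abs, abs_of_nonneg (Hf_nonneg hf01 hfmono zero_le_one _)]
            refine Hf_mono hf01 hfmono zero_le_one ?_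
            nlinarith [hA0 ω]
          have hfn : (fun ω => Hf f (Real.sqrt q) (A ω))
              = fun ω => (Real.sqrt q)⁻¹ * Hf f 1 (Real.sqrt q * A ω) :=
            funext fun ω => Hf_scale hf01 hfmono hsqpos _
          rw [hfn]
          exact hint2.const_mul _
        rw [hitform, hlam0, integral_undef hnint]
  have part1 : ∀ q ∈ Set.Ioc (0:ℝ) 1, ∀ s, 0 ≤ s → lam 1 s ≤ lam q s := fun q hq s hs =>
    le_of_tendsto (hlim 1 h1mem s hs) (Eventually.of_forall fun n => key1 q hq n s hs)
  -- the scaling bound via minimality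
  have key2 : ∀ q ∈ Set.Ioc (0:ℝ) 1, ∀ s, 0 ≤ s →
      lam q s ≤ (Real.sqrt q)⁻¹ * lam 1 (q * s) := by
    intro q hq
    have hsqpos : 0 < Real.sqrt q := Real.sqrt_pos.2 hq.1
    have hμmono : MonotoneOn (fun u => (Real.sqrt q)⁻¹ * lam 1 (q * u)) (Set.Ici 0) := by
      intro x hx y hy hxy
      refine mul_le_mul_of_nonneg_left ?_ (inv_nonneg.2 hsqpos.le)
      exact hmono 1 h1mem (mul_nonneg hq.1.le hx) (mul_nonneg hq.1.le hy)
        (mul_le_mul_of_nonneg_left hxy hq.1.le)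
    refine hmin q hq _ hμmono ?_
    intro s hs
    have hgmono : MonotoneOn (fun u => lam 1 (q * u)) (Set.Icc 0 s) := fun x hx y hy hxy =>
      hmono 1 h1mem (mul_nonneg hq.1.le hx.1) (mul_nonneg hq.1.le hy.1)
        (mul_le_mul_of_nonneg_left hxy hq.1.le)
    -- measurability of the two suprema
    obtain ⟨d, hd1, hd2⟩ := exists_seq s hs
    set Z₁ : Ω → ℝ := fun ω => ⨆ s' : Set.Icc (0:ℝ) s,
      (Real.sqrt q * B (s':ℝ) ω + lam 1 (q * (s':ℝ))) with hZ₁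
    set Z₂ : Ω → ℝ := fun ω => ⨆ s' : Set.Icc (0:ℝ) s,
      (B (q * (s':ℝ)) ω + lam 1 (q * (s':ℝ))) with hZ₂
    have hZ₁m : Measurable Z₁ := by
      have heq : Z₁ = fun ω => ⨆ n, (Real.sqrt q * B (d n) ω + lam 1 (q * d n)) :=
        funext fun ω => sup_eq hs hd1 hd2 (continuous_const.mul (hBcont ω)) hgmono
      rw [heq]
      exact Measurable.iSup fun n => ((hBmeas _).const_mul _).add_const _
    have hZ₂m : Measurable Z₂ := by
      have heq : Z₂ = fun ω => ⨆ n, (B (q * d n) ω + lam 1 (q * d n)) :=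
        funext fun ω => sup_eq hs hd1 hd2 ((hBcont ω).comp (continuous_mul_left q)) hgmono
      rw [heq]
      exact Measurable.iSup fun n => (hBmeas _).add_const _
    have hcont1 : Continuous (Hf f 1) := Hf_cont hf01 hfmono zero_le_one
    -- the law step
    have hlaw : (∫ ω, Hf f 1 (Z₁ ω)) = ∫ ω, Hf f 1 (Z₂ ω) := by
      have hmap := law_sup B hB hq hs hgmono
      calc (∫ ω, Hf f 1 (Z₁ ω))
          = ∫ z, Hf f 1 z ∂(Measure.map Z₁ ℙ) :=
            (integral_map hZ₁m.aemeasurable hcont1.aestronglyMeasurable).symm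
        _ = ∫ z, Hf f 1 z ∂(Measure.map Z₂ ℙ) := by rw [hZ₁, hZ₂, hmap]
        _ = ∫ ω, Hf f 1 (Z₂ ω) :=
            integral_map hZ₂m.aemeasurable hcont1.aestronglyMeasurable
    -- reindex Z₂ and use the solution property at time q*s
    have hreidx : ∀ ω, Z₂ ω = ⨆ u : Set.Icc (0:ℝ) (q*s), (B (u:ℝ) ω + lam 1 (u:ℝ)) :=
      fun ω => sup_reindex hq.1 (fun t => B t ω + lam 1 t)
    have hsol1 : lam 1 (q * s) = ∫ ω, Hf f 1 (Z₂ ω) := by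
      have hfun : (fun ω => Hf f 1 (Z₂ ω))
          = fun ω => Hf f 1 (⨆ u : Set.Icc (0:ℝ) (q*s), (B (u:ℝ) ω + lam 1 (u:ℝ))) :=
        funext fun ω => by rw [hreidx ω]
      rw [hfun, hsol 1 h1mem (q*s) (mul_nonneg hq.1.le hs)]
      simp only [Real.sqrt_one, Hf_eq]
    -- identify the fixed point equation for μ
    have hAμ : ∀ ω, Real.sqrt q * (⨆ s' : Set.Icc (0:ℝ) s,
        (B (s':ℝ) ω + (Real.sqrt q)⁻¹ * lam 1 (q * (s':ℝ)))) = Z₁ ω := by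
      intro ω
      rw [Real.mul_iSup_of_nonneg hsqpos.le]
      exact iSup_congr fun s' => by
        rw [mul_add, ← mul_assoc, mul_inv_cancel₀ hsqpos.ne', one_mul]
    calc (Real.sqrt q)⁻¹ * lam 1 (q * s)
        = (Real.sqrt q)⁻¹ * ∫ ω, Hf f 1 (Z₂ ω) := by rw [← hsol1]
      _ = (Real.sqrt q)⁻¹ * ∫ ω, Hf f 1 (Z₁ ω) := by rw [hlaw]
      _ = ∫ ω, (Real.sqrt q)⁻¹ * Hf f 1 (Z₁ ω) := (integral_const_mul _ _).symm
      _ = ∫ ω, Hf f (Real.sqrt q) (⨆ s' : Set.Icc (0:ℝ) s,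
            (B (s':ℝ) ω + (Real.sqrt q)⁻¹ * lam 1 (q * (s':ℝ)))) := by
          refine integral_congr_ae (Eventually.of_forall fun ω => ?_)
          show (Real.sqrt q)⁻¹ * Hf f 1 (Z₁ ω)
            = Hf f (Real.sqrt q) (⨆ s' : Set.Icc (0:ℝ) s,
                (B (s':ℝ) ω + (Real.sqrt q)⁻¹ * lam 1 (q * (s':ℝ))))
          rw [Hf_scale hf01 hfmono hsqpos, hAμ ω]
      _ = ∫ ω, ∫ x in Set.Ioo (0:ℝ)
            (⨆ s' : Set.Icc (0:ℝ) s,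
              (B (s':ℝ) ω + (Real.sqrt q)⁻¹ * lam 1 (q * (s':ℝ)))),
            f (Real.sqrt q * x) := by
          simp only [Hf_eq]
  -- conclusions
  have hsqfacts : ∀ q ∈ Set.Ioc (0:ℝ) 1, q ≤ Real.sqrt q ∧ 0 < Real.sqrt q ∧
      Real.sqrt q ≤ 1 := by
    intro q hq
    have hsqpos : 0 < Real.sqrt q := Real.sqrt_pos.2 hq.1
    have hsqle1 : Real.sqrt q ≤ 1 := by
      rw [show (1:ℝ) = Real.sqrt 1 from (Real.sqrt_one).symm]
      exact Real.sqrt_le_sqrt hq.2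
    refine ⟨?_, hsqpos, hsqle1⟩
    calc q = Real.sqrt q * Real.sqrt q := (Real.mul_self_sqrt hq.1.le).symm
      _ ≤ Real.sqrt q * 1 := mul_le_mul_of_nonneg_left hsqle1 hsqpos.le
      _ = Real.sqrt q := mul_one _
  have part2 : ∀ q ∈ Set.Ioc (0:ℝ) 1, ∀ s, 0 ≤ s →
      q * lam 1 s ≤ Real.sqrt q * lam 1 s ∧ Real.sqrt q * lam 1 s ≤ lam 1 (q * s) := by
    intro q hq s hs
    obtain ⟨hq_sq, hsqpos, _⟩ := hsqfacts q hq
    constructor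
    · exact mul_le_mul_of_nonneg_right hq_sq (hlam_nonneg 1 h1mem s hs)
    · have h1 : lam 1 s ≤ (Real.sqrt q)⁻¹ * lam 1 (q * s) :=
        le_trans (part1 q hq s hs) (key2 q hq s hs)
      calc Real.sqrt q * lam 1 s ≤ Real.sqrt q * ((Real.sqrt q)⁻¹ * lam 1 (q * s)) :=
            mul_le_mul_of_nonneg_left h1 hsqpos.le
        _ = lam 1 (q * s) := by rw [← mul_assoc, mul_inv_cancel₀ hsqpos.ne', one_mul]
  refine ⟨part1, part2, ?_⟩
  intro s t hs hst
  rcases eq_or_lt_of_le hs with heq0 | hspos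
  · rw [← heq0, sub_zero, hlam_zero 1 h1mem, zero_add]
  rcases eq_or_lt_of_le hst with heqt | hlt
  · rw [heqt, sub_self, hlam_zero 1 h1mem, add_zero]
  have ht : 0 < t := lt_trans hspos hlt
  have hq1 : s / t ∈ Set.Ioc (0:ℝ) 1 := ⟨div_pos hspos ht, (div_le_one ht).2 hst⟩
  have hq2 : (t - s) / t ∈ Set.Ioc (0:ℝ) 1 :=
    ⟨div_pos (by linarith) ht, (div_le_one ht).2 (by linarith)⟩
  have h1 := (part2 _ hq1 t ht.le).1.trans (part2 _ hq1 t ht.le).2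
  have h2 := (part2 _ hq2 t ht.le).1.trans (part2 _ hq2 t ht.le).2
  rw [div_mul_cancel₀ _ ht.ne'] at h1 h2
  have hsum : s / t + (t - s) / t = 1 := by field_simp; ring
  have : (s / t) * lam 1 t + ((t - s) / t) * lam 1 t = lam 1 t := by
    rw [← add_mul, hsum, one_mul]
  linarith

end
end
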